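/- For every integer l with 1 ≤ l and 2l − 1 ≤ n1, the expected number of ordered pairs (P, Q) of present entry paths of length l from u such that P and Q share no vertex other than u equals ((n1−1)!/(n1−2l+1)!) · n2 · (n2−1) · p1^{2(l−1)} · b². -/

import Mathlib

open MeasureTheory

/-- The Bernoulli measure on `Bool` with success probability `p` (for `p ∈ [0,1]`). -/
noncomputable def bernoulliMeasure (p : ℝ) : Measure Bool :=
  ENNReal.ofReal p • Measure.dirac true + ENNReal.ofReal (1 - p) • Measure.dirac false

/-- Sample space: one Boolean indicator for each unordered pair of vertices of the
backward class `V1 = Fin n1`, and one for each pair in `V1 × V2`. -/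
abbrev Omega (n1 n2 : ℕ) : Type :=
  (Sym2 (Fin n1) → Bool) × (Fin n1 × Fin n2 → Bool)

/-- Product measure: each within-`V1` edge indicator is Bernoulli(`p1`), each bridge
indicator is Bernoulli(`b`), all independent. -/
noncomputable def graphMeasure (n1 n2 : ℕ) (p1 b : ℝ) : Measure (Omega n1 n2) :=
  (Measure.pi fun _ : Sym2 (Fin n1) => bernoulliMeasure p1).prod
    (Measure.pi fun _ : Fin n1 × Fin n2 => bernoulliMeasure b)

open scoped Classical in
/-- Entry paths of length `l` from `u`: tuples `(v_1, …, v_l, w)` with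
`v_1 = u`, the `v_i ∈ V1` pairwise distinct, and `w ∈ V2`. -/
noncomputable def entryPaths (n1 n2 l : ℕ) (u : Fin n1) :
    Finset ((Fin l → Fin n1) × Fin n2) :=
  Finset.univ.filter fun P => Function.Injective P.1 ∧ ∀ h : 0 < l, P.1 ⟨0, h⟩ = u

/-- An entry path is present in the outcome `ω` if all `l − 1` within-`V1` edges
along it and its final bridge are present. -/
def present (n1 n2 l : ℕ) (P : (Fin l → Fin n1) × Fin n2) (ω : Omega n1 n2) : Prop :=
  (∀ j : Fin (l - 1),
      ω.1 s(P.1 ⟨j.1, lt_of_lt_of_le j.2 (Nat.sub_le l 1)⟩,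
            P.1 ⟨j.1 + 1, Nat.add_lt_of_lt_sub j.2⟩) = true) ∧
  ∀ h : 0 < l, ω.2 (P.1 ⟨l - 1, Nat.sub_lt h Nat.one_pos⟩, P.2) = true

open scoped Classical in
/-- `X_l`: the number of present entry paths of length `l` from `u`, as a real number. -/
noncomputable def pathCount (n1 n2 l : ℕ) (u : Fin n1) (ω : Omega n1 n2) : ℝ :=
  ((entryPaths n1 n2 l u).filter fun P => present n1 n2 l P ω).card

/-!
By linearity of expectation the expected count is the sum, over vertex-disjoint pairs of entry
paths with distinct endpoints in `V2`, of the probability that both paths are present. For such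
a pair the `2(l-1)` edges inside `V1` are distinct (each edge of the first path contains one of
its vertices other than `u`, which the second path avoids) and so are the two bridges, so by
independence that probability is `p1^(2(l-1)) b²`. The pairs are counted by reading their
`2(l-1)` vertices other than `u` as an injective map `Fin (l-1) ⊕ Fin (l-1) → V1 \ {u}`, which
gives `(n1-1)!/(n1-2l+1)!` choices, times `n2(n2-1)` choices of the endpoints.
-/

open Finset Function

lemma isProbabilityMeasure_bernoulliMeasure {p : ℝ} (h0 : 0 ≤ p) (h1 : p ≤ 1) :
    IsProbabilityMeasure (bernoulliMeasure p) :=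
  ⟨by simp [bernoulliMeasure, ← ENNReal.ofReal_add h0 (sub_nonneg.2 h1)]⟩

lemma bernoulliMeasure_singleton_true (p : ℝ) : bernoulliMeasure p {true} = ENNReal.ofReal p := by
  simp [bernoulliMeasure]

lemma pi_bernoulliMeasure_forall_true {ι : Type*} [Fintype ι] {p : ℝ} (h0 : 0 ≤ p) (h1 : p ≤ 1)
    (E : Finset ι) :
    Measure.pi (fun _ : ι => bernoulliMeasure p) {f | ∀ i ∈ E, f i = true} =
      ENNReal.ofReal p ^ #E := by
  classical
  have := isProbabilityMeasure_bernoulliMeasure h0 h1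
  have hpi : {f : ι → Bool | ∀ i ∈ E, f i = true} = (E : Set ι).pi fun _ => {true} := by
    ext; simp
  rw [hpi, ← Set.univ_pi_ite, Measure.pi_pi]
  simp_rw [apply_ite (bernoulliMeasure p), bernoulliMeasure_singleton_true, measure_univ]
  simp [prod_ite_mem]

lemma graphMeasure_real_forall_true {n1 n2 : ℕ} {p1 b : ℝ} (hp0 : 0 ≤ p1) (hp1 : p1 ≤ 1)
    (hb0 : 0 ≤ b) (hb1 : b ≤ 1) (E : Finset (Sym2 (Fin n1))) (B : Finset (Fin n1 × Fin n2)) :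
    (graphMeasure n1 n2 p1 b).real {ω | (∀ e ∈ E, ω.1 e = true) ∧ ∀ x ∈ B, ω.2 x = true} =
      p1 ^ #E * b ^ #B := by
  have hprod : {ω : Omega n1 n2 | (∀ e ∈ E, ω.1 e = true) ∧ ∀ x ∈ B, ω.2 x = true} =
      {f | ∀ e ∈ E, f e = true} ×ˢ {g | ∀ x ∈ B, g x = true} := rfl
  rw [measureReal_def, graphMeasure, hprod, Measure.prod_prod,
    pi_bernoulliMeasure_forall_true hp0 hp1, pi_bernoulliMeasure_forall_true hb0 hb1]
  simp [ENNReal.toReal_ofReal, hp0, hb0]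

lemma isProbabilityMeasure_graphMeasure {n1 n2 : ℕ} {p1 b : ℝ} (hp0 : 0 ≤ p1) (hp1 : p1 ≤ 1)
    (hb0 : 0 ≤ b) (hb1 : b ≤ 1) : IsProbabilityMeasure (graphMeasure n1 n2 p1 b) := by
  have := isProbabilityMeasure_bernoulliMeasure hp0 hp1
  have := isProbabilityMeasure_bernoulliMeasure hb0 hb1
  unfold graphMeasure
  infer_instance

lemma integral_card_filter {Ω ι : Type*} [MeasurableSpace Ω] (μ : Measure Ω) [IsFiniteMeasure μ]
    (s : Finset ι) (p : ι → Ω → Prop) [∀ i ω, Decidable (p i ω)]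
    (hp : ∀ i ∈ s, MeasurableSet {ω | p i ω}) :
    ∫ ω, (#{i ∈ s | p i ω} : ℝ) ∂μ = ∑ i ∈ s, μ.real {ω | p i ω} := by
  have hind : ∀ ω, (#{i ∈ s | p i ω} : ℝ) = ∑ i ∈ s, {ω | p i ω}.indicator 1 ω := by
    intro ω
    rw [card_filter, Nat.cast_sum]
    exact sum_congr rfl fun i _ => by by_cases h : p i ω <;> simp [h]
  simp_rw [hind]
  rw [integral_finsetSum _ fun i hi => (integrable_const 1).indicator (hp i hi)]
  exact sum_congr rfl fun i hi => integral_indicator_one (hp i hi)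

section Paths

variable {α : Type*} [DecidableEq α] {m : ℕ}

def pathEdges (f : Fin (m + 1) → α) : Finset (Sym2 α) :=
  univ.image fun j : Fin m => s(f j.castSucc, f j.succ)

lemma card_pathEdges {f : Fin (m + 1) → α} (hf : Injective f) : #(pathEdges f) = m := by
  rw [pathEdges, card_image_of_injective, card_univ, Fintype.card_fin]
  intro j k hjk
  rcases Sym2.eq_iff.1 hjk with ⟨h, -⟩ | ⟨h, h'⟩
  · exact Fin.castSucc_injective m (hf h)
  · have h1 := congrArg Fin.val (hf h)
    have h2 := congrArg Fin.val (hf h')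
    simp only [Fin.val_castSucc, Fin.val_succ] at h1 h2
    omega

lemma disjoint_pathEdges {u : α} {P Q : Fin (m + 1) → α} (hP : Injective P) (hPu : P 0 = u)
    (hPQ : ∀ i j, P i = Q j → P i = u) : Disjoint (pathEdges P) (pathEdges Q) := by
  simp only [pathEdges, disjoint_left, mem_image, mem_univ, true_and, not_exists]
  rintro _ ⟨j, rfl⟩ k hk
  have hsucc : P j.succ ≠ u := hPu ▸ hP.ne (Fin.succ_ne_zero j)
  rcases Sym2.eq_iff.1 hk with ⟨-, h⟩ | ⟨h, -⟩
  · exact hsucc (hPQ _ _ h.symm)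
  · exact hsucc (hPQ _ _ h.symm)

end Paths

lemma present_succ_iff {n1 n2 m : ℕ} (P : (Fin (m + 1) → Fin n1) × Fin n2) (ω : Omega n1 n2) :
    present n1 n2 (m + 1) P ω ↔
      (∀ e ∈ pathEdges P.1, ω.1 e = true) ∧ ω.2 (P.1 (Fin.last m), P.2) = true := by
  simp only [present, pathEdges, mem_image, mem_univ, true_and, forall_exists_index,
    forall_apply_eq_imp_iff]
  exact and_congr Iff.rfl ⟨fun h => h m.succ_pos, fun h _ => h⟩

lemma graphMeasure_real_present_pair {n1 n2 m : ℕ} {u : Fin n1} {p1 b : ℝ} (hp0 : 0 ≤ p1)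
    (hp1 : p1 ≤ 1) (hb0 : 0 ≤ b) (hb1 : b ≤ 1) {P Q : (Fin (m + 1) → Fin n1) × Fin n2}
    (hP : Injective P.1) (hQ : Injective Q.1) (hPu : P.1 0 = u)
    (hPQ : ∀ i j, P.1 i = Q.1 j → P.1 i = u) (hne : P.2 ≠ Q.2) :
    (graphMeasure n1 n2 p1 b).real
        {ω | present n1 n2 (m + 1) P ω ∧ present n1 n2 (m + 1) Q ω} = p1 ^ (2 * m) * b ^ 2 := by
  classical
  have hcyl : {ω | present n1 n2 (m + 1) P ω ∧ present n1 n2 (m + 1) Q ω} =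
      {ω : Omega n1 n2 | (∀ e ∈ pathEdges P.1 ∪ pathEdges Q.1, ω.1 e = true) ∧
        ∀ x ∈ ({(P.1 (Fin.last m), P.2), (Q.1 (Fin.last m), Q.2)} : Finset _), ω.2 x = true} := by
    ext ω
    simp only [Set.mem_ofPred_eq, present_succ_iff, mem_union, or_imp, forall_and, mem_insert,
      mem_singleton, forall_eq]
    tauto
  rw [hcyl, graphMeasure_real_forall_true hp0 hp1 hb0 hb1,
    card_union_of_disjoint (disjoint_pathEdges hP hPu hPQ), card_pathEdges hP, card_pathEdges hQ,
    card_pair fun h : (P.1 (Fin.last m), P.2) = (Q.1 (Fin.last m), Q.2) => hne (Prod.ext_iff.1 h).2,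
    two_mul]

open scoped Classical in
lemma graphMeasure_real_disjoint_and_present {n1 n2 m : ℕ} {u : Fin n1} {p1 b : ℝ}
    (hp0 : 0 ≤ p1) (hp1 : p1 ≤ 1) (hb0 : 0 ≤ b) (hb1 : b ≤ 1)
    {PQ : ((Fin (m + 1) → Fin n1) × Fin n2) × ((Fin (m + 1) → Fin n1) × Fin n2)}
    (hPQ : PQ ∈ entryPaths n1 n2 (m + 1) u ×ˢ entryPaths n1 n2 (m + 1) u) :
    (graphMeasure n1 n2 p1 b).real
        {ω | ((∀ i j : Fin (m + 1), PQ.1.1 i = PQ.2.1 j → PQ.1.1 i = u) ∧ PQ.1.2 ≠ PQ.2.2) ∧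
          present n1 n2 (m + 1) PQ.1 ω ∧ present n1 n2 (m + 1) PQ.2 ω} =
      if (∀ i j : Fin (m + 1), PQ.1.1 i = PQ.2.1 j → PQ.1.1 i = u) ∧ PQ.1.2 ≠ PQ.2.2 then
        p1 ^ (2 * m) * b ^ 2 else 0 := by
  split_ifs with hC
  · simp only [mem_product, entryPaths, mem_filter, mem_univ, true_and] at hPQ
    simp only [and_iff_right hC]
    exact graphMeasure_real_present_pair hp0 hp1 hb0 hb1 hPQ.1.1 hPQ.2.1 (hPQ.1.2 m.succ_pos)
      hC.1 hC.2
  · simp only [iff_false_intro hC, false_and, Set.ofPred_false, measureReal_empty]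

section Counting

variable {α : Type*} {m : ℕ}

def IsDisjointPathPairFrom (u : α) (P Q : Fin (m + 1) → α) : Prop :=
  Injective P ∧ P 0 = u ∧ Injective Q ∧ Q 0 = u ∧ ∀ i j, P i = Q j → P i = u

lemma isDisjointPathPairFrom_cons_iff {u : α} {f : Fin m ⊕ Fin m → α} :
    IsDisjointPathPairFrom u (Fin.cons u (f ∘ Sum.inl)) (Fin.cons u (f ∘ Sum.inr)) ↔
      Injective f ∧ ∀ k, f k ≠ u := by
  obtain ⟨s, t, rfl⟩ : ∃ s t, f = Sum.elim s t := ⟨_, _, (Sum.elim_comp_inl_inr f).symm⟩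
  simp only [IsDisjointPathPairFrom, Fin.cons_injective_iff, Fin.forall_fin_succ, Fin.cons_zero,
    Fin.cons_succ, Sum.elim_comp_inl, Sum.elim_comp_inr, Sum.elim_injective, Sum.forall,
    Sum.elim_inl, Sum.elim_inr, Set.mem_range, not_exists, imp_self, implies_true, true_and]
  constructor
  · rintro ⟨⟨hsu, hs⟩, ⟨htu, ht⟩, hst⟩
    exact ⟨⟨hs, ht, fun a b h => hsu a (hst a b h)⟩, hsu, htu⟩
  · rintro ⟨⟨hs, ht, hst⟩, hsu, htu⟩
    exact ⟨⟨hsu, hs⟩, ⟨htu, ht⟩, fun a b h => absurd h (hst a b)⟩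

open scoped Classical in
lemma card_isDisjointPathPairFrom [Fintype α] (u : α) :
    #(univ.filter fun PQ : (Fin (m + 1) → α) × (Fin (m + 1) → α) =>
        IsDisjointPathPairFrom u PQ.1 PQ.2) =
      (Fintype.card α - 1).descFactorial (2 * m) := by
  let ofEmbedding (e : Fin m ⊕ Fin m ↪ {x // x ≠ u}) : (Fin (m + 1) → α) × (Fin (m + 1) → α) :=
    (Fin.cons u (Subtype.val ∘ e ∘ Sum.inl), Fin.cons u (Subtype.val ∘ e ∘ Sum.inr))
  have hinj : Injective ofEmbedding := by
    intro e e' h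
    simp only [ofEmbedding, Prod.mk.injEq, Fin.cons_inj, true_and] at h
    ext (k | k)
    · exact congrFun h.1 k
    · exact congrFun h.2 k
  have himage :
      univ.image ofEmbedding = univ.filter fun PQ => IsDisjointPathPairFrom u PQ.1 PQ.2 := by
    ext ⟨P, Q⟩
    simp only [mem_image, mem_univ, true_and, mem_filter]
    constructor
    · rintro ⟨e, he⟩
      obtain ⟨rfl, rfl⟩ := Prod.ext_iff.1 he
      exact isDisjointPathPairFrom_cons_iff.2
        ⟨Subtype.val_injective.comp e.injective, fun k => (e k).2⟩
    · intro h
      have hP : Fin.cons u (Fin.tail P) = P := h.2.1 ▸ Fin.cons_self_tail P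
      have hQ : Fin.cons u (Fin.tail Q) = Q := h.2.2.2.1 ▸ Fin.cons_self_tail Q
      obtain ⟨hf, hfu⟩ :=
        (isDisjointPathPairFrom_cons_iff (f := Sum.elim (Fin.tail P) (Fin.tail Q))).1
          (by rwa [Sum.elim_comp_inl, Sum.elim_comp_inr, hP, hQ])
      exact ⟨⟨fun k => ⟨_, hfu k⟩, fun a b hab => hf (congrArg Subtype.val hab)⟩, Prod.ext hP hQ⟩
  rw [← himage, card_image_of_injective _ hinj, card_univ, Fintype.card_embedding_eq]
  simp [Fintype.card_subtype_compl, two_mul]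

end Counting

open scoped Classical in
lemma card_disjoint_entryPath_pairs (n1 n2 m : ℕ) (u : Fin n1) :
    #(((entryPaths n1 n2 (m + 1) u) ×ˢ (entryPaths n1 n2 (m + 1) u)).filter fun PQ =>
        (∀ i j : Fin (m + 1), PQ.1.1 i = PQ.2.1 j → PQ.1.1 i = u) ∧ PQ.1.2 ≠ PQ.2.2) =
      (n1 - 1).descFactorial (2 * m) * (n2 * n2 - n2) := by
  rw [card_equiv (Equiv.prodProdProdComm _ _ _ _)
      (t := (univ.filter fun PQ => IsDisjointPathPairFrom u PQ.1 PQ.2) ×ˢ univ.offDiag),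
    card_product, card_isDisjointPathPairFrom, offDiag_card, card_univ, Fintype.card_fin,
    Fintype.card_fin]
  rintro ⟨⟨P, w⟩, Q, w'⟩
  simp only [mem_filter, mem_product, mem_univ, mem_offDiag, true_and, entryPaths,
    Equiv.prodProdProdComm_apply, Fin.zero_eta, Nat.zero_lt_succ, forall_true_left]
  simp only [IsDisjointPathPairFrom, and_assoc]

lemma cast_descFactorial_eq_div {K : Type*} [Field K] [CharZero K] {n k : ℕ} (h : k ≤ n) :
    (n.descFactorial k : K) = n.factorial / (n - k).factorial := by
  rw [eq_div_iff (Nat.cast_ne_zero.2 (Nat.factorial_ne_zero _)), ← Nat.cast_mul, mul_comm,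
    Nat.factorial_mul_descFactorial h]

open scoped Classical in
theorem stmt14_general (n1 n2 : ℕ) (u : Fin n1)
    (p1 b : ℝ) (hp0 : 0 ≤ p1) (hp1 : p1 ≤ 1) (hb0 : 0 ≤ b) (hb1 : b ≤ 1)
    (l : ℕ) (hl1 : 1 ≤ l) (hln : 2 * l - 1 ≤ n1) :
    ∫ ω, ((((entryPaths n1 n2 l u) ×ˢ (entryPaths n1 n2 l u)).filter fun PQ =>
          ((∀ i j : Fin l, PQ.1.1 i = PQ.2.1 j → PQ.1.1 i = u) ∧
              PQ.1.2 ≠ PQ.2.2) ∧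
            present n1 n2 l PQ.1 ω ∧ present n1 n2 l PQ.2 ω).card : ℝ)
        ∂(graphMeasure n1 n2 p1 b) =
      ((n1 - 1).factorial : ℝ) / ((n1 - (2 * l - 1)).factorial : ℝ) *
        (n2 : ℝ) * ((n2 : ℝ) - 1) * p1 ^ (2 * (l - 1)) * b ^ 2 := by
  obtain ⟨m, rfl⟩ : ∃ m, l = m + 1 := ⟨l - 1, by omega⟩
  have := isProbabilityMeasure_graphMeasure (n1 := n1) (n2 := n2) hp0 hp1 hb0 hb1
  rw [integral_card_filter _ _ _ fun _ _ => (Set.toFinite _).measurableSet,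
    sum_congr rfl fun PQ hPQ => graphMeasure_real_disjoint_and_present hp0 hp1 hb0 hb1 hPQ,
    ← sum_filter, sum_const, card_disjoint_entryPath_pairs, nsmul_eq_mul, Nat.cast_mul,
    show n1 - (2 * (m + 1) - 1) = n1 - 1 - 2 * m by omega, cast_descFactorial_eq_div (by omega),
    Nat.cast_sub (Nat.le_mul_self n2), Nat.cast_mul, add_tsub_cancel_right]
  ring

open scoped Classical in
/-- The dominant `Z_0` term in the second-moment computation of Lemma 5: the expected
number of ordered pairs of present, vertex-disjoint-except-`u` entry paths of length
`l` from `u` equals `((n1−1)!/(n1−2l+1)!) · n2 · (n2−1) · p1^{2(l−1)} · b²`. -/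
theorem stmt14 (n1 n2 : ℕ) (hn1 : 0 < n1) (hn2 : 0 < n2) (u : Fin n1)
    (p1 b : ℝ) (hp0 : 0 ≤ p1) (hp1 : p1 ≤ 1) (hb0 : 0 ≤ b) (hb1 : b ≤ 1)
    (l : ℕ) (hl1 : 1 ≤ l) (hln : 2 * l - 1 ≤ n1) :
    ∫ ω, ((((entryPaths n1 n2 l u) ×ˢ (entryPaths n1 n2 l u)).filter fun PQ =>
          ((∀ i j : Fin l, PQ.1.1 i = PQ.2.1 j → PQ.1.1 i = u) ∧
              PQ.1.2 ≠ PQ.2.2) ∧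
            present n1 n2 l PQ.1 ω ∧ present n1 n2 l PQ.2 ω).card : ℝ)
        ∂(graphMeasure n1 n2 p1 b) =
      ((n1 - 1).factorial : ℝ) / ((n1 - (2 * l - 1)).factorial : ℝ) *
        (n2 : ℝ) * ((n2 : ℝ) - 1) * p1 ^ (2 * (l - 1)) * b ^ 2 :=
  stmt14_general n1 n2 u p1 b hp0 hp1 hb0 hb1 l hl1 hln
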